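/- arXiv:2603.14080 — 8 statements merged into one kernel-verified Lean document; each statement's English description precedes it below -/
import Mathlib

section
/- Let A be an abelian group, H1 and H2 subgroups of A with H := H1 ∩ H2 of finite index in A, and let π : A → A/H be the quotient map. Then for all a1, a2 ∈ A, the image π((a1 + H1) ∪ (a2 + H2)) has cardinality at least that of π(H1 ∪ H2). -/
/-!
In `A ⧸ (H1 ⊓ H2)` the images of `H1` and `H2` are subgroups meeting only in `0`, and the
images of the cosets `a1 + H1`, `a2 + H2` are translates of them. Two such translates meet in
at most one point, since their intersection is a coset of the trivial group; inclusion–exclusion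
then shows the union of the translates is at least as large as the union of the subgroups.
-/

namespace Subgroup

variable {G N : Type*} [Group G] [Group N]

@[to_additive]
theorem map_inf_eq_of_ker_le (H K : Subgroup G) (f : G →* N) (hf : f.ker ≤ H) :
    (H ⊓ K).map f = H.map f ⊓ K.map f := by
  refine le_antisymm (map_inf_le H K f) ?_
  rintro _ ⟨⟨u, hu, rfl⟩, ⟨v, hv, hvu⟩⟩
  have hker : u⁻¹ * v ∈ f.ker := by simp [MonoidHom.mem_ker, hvu]
  have hvH : v ∈ H := by simpa using H.mul_mem hu (hf hker)
  exact ⟨v, ⟨hvH, hv⟩, hvu⟩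

@[to_additive]
theorem subsingleton_image_mul_inter_image_mul {H K : Subgroup G} (hHK : H ⊓ K = ⊥)
    (x y : G) : ((x * ·) '' (H : Set G) ∩ (y * ·) '' (K : Set G)).Subsingleton := by
  rintro _ ⟨⟨h, hh, rfl⟩, ⟨k, hk, hk_eq⟩⟩ _ ⟨⟨h', hh', rfl⟩, ⟨k', hk', hk'_eq⟩⟩
  have hstep : h⁻¹ * h' = k⁻¹ * k' :=
    calc h⁻¹ * h' = (x * h)⁻¹ * (x * h') := by group
      _ = (y * k)⁻¹ * (y * k') := by simp only at hk_eq hk'_eq; rw [hk_eq, hk'_eq]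
      _ = k⁻¹ * k' := by group
  have hmem : h⁻¹ * h' ∈ H ⊓ K :=
    ⟨H.mul_mem (H.inv_mem hh) hh', hstep ▸ K.mul_mem (K.inv_mem hk) hk'⟩
  rw [hHK, mem_bot, inv_mul_eq_one] at hmem
  rw [hmem]

@[to_additive]
theorem ncard_union_le_ncard_image_mul_union_image_mul [Finite G] {H K : Subgroup G}
    (hHK : H ⊓ K = ⊥) (x y : G) :
    ((H : Set G) ∪ K).ncard ≤ ((x * ·) '' (H : Set G) ∪ (y * ·) '' (K : Set G)).ncard := by
  have hinter : (H : Set G) ∩ K = {1} := by rw [← coe_inf, hHK, coe_bot]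
  have h₁ := Set.ncard_union_add_ncard_inter (H : Set G) K
  have h₂ := Set.ncard_union_add_ncard_inter ((x * ·) '' (H : Set G)) ((y * ·) '' (K : Set G))
  rw [hinter, Set.ncard_singleton] at h₁
  rw [Set.ncard_image_of_injective _ (mul_right_injective x),
    Set.ncard_image_of_injective _ (mul_right_injective y)] at h₂
  have h₃ :=
    Set.ncard_le_one_iff_subsingleton.mpr (subsingleton_image_mul_inter_image_mul hHK x y)
  omega

@[to_additive]
theorem image_image_mul_left (f : G →* N) (H : Subgroup G) (x : G) :
    f '' ((x * ·) '' (H : Set G)) = (f x * ·) '' (H.map f : Set N) := by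
  rw [coe_map, Set.image_image, Set.image_image]
  simp only [map_mul]

end Subgroup

/-- For an abelian group `A` with subgroups `H1, H2` such that
`H := H1 ⊓ H2` has finite index, and `π : A → A ⧸ H` the quotient map, for all
`a1, a2 ∈ A` the image `π ((a1 + H1) ∪ (a2 + H2))` has cardinality at least that of
`π (H1 ∪ H2)`. -/
theorem rogers_two_subgroups {A : Type*} [AddCommGroup A] (H1 H2 : AddSubgroup A)
    [Finite (A ⧸ (H1 ⊓ H2))] (a1 a2 : A) :
    ((QuotientAddGroup.mk : A → A ⧸ (H1 ⊓ H2)) ''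
        (((a1 + ·) '' (H1 : Set A)) ∪ ((a2 + ·) '' (H2 : Set A)))).ncard ≥
      ((QuotientAddGroup.mk : A → A ⧸ (H1 ⊓ H2)) '' ((H1 : Set A) ∪ (H2 : Set A))).ncard := by
  set π := QuotientAddGroup.mk' (H1 ⊓ H2)
  have hdisj : H1.map π ⊓ H2.map π = ⊥ := by
    rw [← AddSubgroup.map_inf_eq_of_ker_le _ _ _ (by simp [π]),
      QuotientAddGroup.map_mk'_self]
  have hcard := AddSubgroup.ncard_union_le_ncard_image_add_union_image_add hdisj (π a1) (π a2)
  rw [← AddSubgroup.image_image_add_left, ← AddSubgroup.image_image_add_left,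
    AddSubgroup.coe_map, AddSubgroup.coe_map, ← Set.image_union, ← Set.image_union] at hcard
  exact hcard
end

section
/- In F_q² with q ≥ 2, three distinct one-dimensional subspaces H1, H2, H3 fail condition (R): there exist translates a1 + H1, a2 + H2, a3 + H3 whose union is strictly smaller than H1 ∪ H2 ∪ H3. -/
/-!
Keep `H1` and `H2` and move `H3` off the origin. Since `H3` is complementary to each of
`H1` and `H2`, the moved line still meets each of them, but now in two different points,
whereas `H3` met `H1 ∪ H2` only in the origin. The moved line has as many points as `H3`
and shares one more with `H1 ∪ H2`, so the union shrinks.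
-/

open Module

theorem Set.ncard_union_lt_of_ncard_inter_lt {α : Type*} {s t t' : Set α}
    (hs : s.Finite := by toFinite_tac) (ht : t.Finite := by toFinite_tac)
    (ht' : t'.Finite := by toFinite_tac) (hcard : t'.ncard = t.ncard)
    (hinter : (s ∩ t).ncard < (s ∩ t').ncard) : (s ∪ t').ncard < (s ∪ t).ncard := by
  have h := Set.ncard_union_add_ncard_inter s t hs ht
  have h' := Set.ncard_union_add_ncard_inter s t' hs ht'
  omega

namespace Submodule

section Lines

variable {K V : Type*} [DivisionRing K] [AddCommGroup V] [Module K V]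

theorem disjoint_of_finrank_eq_one {H L : Submodule K V} (hH : finrank K H = 1)
    (hL : finrank K L = 1) (hne : H ≠ L) : Disjoint H L :=
  (isAtom_iff_finrank_eq_one.2 hH).disjoint_of_ne (isAtom_iff_finrank_eq_one.2 hL) hne

theorem sup_eq_top_of_finrank_eq_one [FiniteDimensional K V] (hV : finrank K V = 2)
    {H L : Submodule K V} (hH : finrank K H = 1) (hL : finrank K L = 1) (hne : H ≠ L) :
    H ⊔ L = ⊤ :=
  eq_top_of_disjoint H L (by omega) (disjoint_of_finrank_eq_one hH hL hne)

end Lines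

section Translates

variable {R M : Type*} [Ring R] [AddCommGroup M] [Module R M]

theorem exists_mem_inter_image_add_of_sup_eq_top {H L : Submodule R M} (h : H ⊔ L = ⊤)
    (a : M) : ∃ p, p ∈ (H : Set M) ∩ (a + ·) '' (L : Set M) := by
  obtain ⟨u, hu, w, hw, rfl⟩ := mem_sup.1 (h ▸ mem_top : a ∈ H ⊔ L)
  exact ⟨u, hu, -w, L.neg_mem hw, by simp⟩

theorem zero_notMem_image_add {L : Submodule R M} {a : M} (ha : a ∉ L) :
    (0 : M) ∉ (a + ·) '' (L : Set M) := by
  rintro ⟨k, hk, hak⟩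
  exact ha (eq_neg_of_add_eq_zero_left hak ▸ L.neg_mem hk)

end Translates

end Submodule

open Submodule in
theorem three_lines_fail_R_general {F : Type*} [Field F] [Fintype F]
    (H1 H2 H3 : Submodule F (F × F))
    (h1 : Module.finrank F H1 = 1) (h2 : Module.finrank F H2 = 1)
    (h3 : Module.finrank F H3 = 1)
    (h12 : H1 ≠ H2) (h13 : H1 ≠ H3) (h23 : H2 ≠ H3) :
    ∃ a1 a2 a3 : F × F,
      (((a1 + ·) '' (H1 : Set (F × F))) ∪ ((a2 + ·) '' (H2 : Set (F × F))) ∪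
          ((a3 + ·) '' (H3 : Set (F × F)))).ncard <
        ((H1 : Set (F × F)) ∪ (H2 : Set (F × F)) ∪ (H3 : Set (F × F))).ncard := by
  have hV : finrank F (F × F) = 2 := by simp
  have d12 := disjoint_of_finrank_eq_one h1 h2 h12
  have d13 := disjoint_of_finrank_eq_one h1 h3 h13
  have d23 := disjoint_of_finrank_eq_one h2 h3 h23
  have hH3 : H3 ≠ ⊤ := fun h ↦ (isAtom_iff_finrank_eq_one.2 h1).ne_bot (disjoint_top.1 (h ▸ d13))
  obtain ⟨a, -, ha⟩ := SetLike.exists_of_lt hH3.lt_top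
  refine ⟨0, 0, a, ?_⟩
  simp only [zero_add, Set.image_id']
  apply Set.ncard_union_lt_of_ncard_inter_lt
    (hcard := Set.ncard_image_of_injective _ (add_right_injective a))
  have hinter : ((H1 : Set (F × F)) ∪ H2) ∩ H3 = {0} := by
    rw [Set.union_inter_distrib_right, ← coe_inf, ← coe_inf, d13.eq_bot, d23.eq_bot, bot_coe,
      Set.union_self]
  rw [hinter, Set.ncard_singleton, Set.one_lt_ncard_iff]
  obtain ⟨p, hp1, hp⟩ := exists_mem_inter_image_add_of_sup_eq_top
    (sup_eq_top_of_finrank_eq_one hV h1 h3 h13) a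
  obtain ⟨p', hp'2, hp'⟩ := exists_mem_inter_image_add_of_sup_eq_top
    (sup_eq_top_of_finrank_eq_one hV h2 h3 h23) a
  refine ⟨p, p', ⟨Or.inl hp1, hp⟩, ⟨Or.inr hp'2, hp'⟩, ?_⟩
  rintro rfl
  have hp0 : p = 0 := (mem_bot F).1 (d12.eq_bot ▸ mem_inf.2 ⟨hp1, hp'2⟩)
  exact zero_notMem_image_add ha (hp0 ▸ hp)

/-- In `F_q²` with `q ≥ 2`, three distinct one-dimensional subspaces
`H1, H2, H3` fail condition (R1'): there exist translates whose union is strictly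
smaller than `H1 ∪ H2 ∪ H3`. -/
theorem three_lines_fail_R {F : Type*} [Field F] [Fintype F] (hq : 2 ≤ Fintype.card F)
    (H1 H2 H3 : Submodule F (F × F))
    (h1 : Module.finrank F H1 = 1) (h2 : Module.finrank F H2 = 1)
    (h3 : Module.finrank F H3 = 1)
    (h12 : H1 ≠ H2) (h13 : H1 ≠ H3) (h23 : H2 ≠ H3) :
    ∃ a1 a2 a3 : F × F,
      (((a1 + ·) '' (H1 : Set (F × F))) ∪ ((a2 + ·) '' (H2 : Set (F × F))) ∪
          ((a3 + ·) '' (H3 : Set (F × F)))).ncard <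
        ((H1 : Set (F × F)) ∪ (H2 : Set (F × F)) ∪ (H3 : Set (F × F))).ncard :=
  three_lines_fail_R_general H1 H2 H3 h1 h2 h3 h12 h13 h23
end

section
/- Let R = ℤ[2i] ⊂ ℤ[i], and consider the ideals I1 = (2), I2 = (2i), I3 = (2+2i, 4) of R. Then I2 is not contained in I1 ∪ I3, but the translate 2 + I2 is contained in I1 ∪ I3. Consequently the ideals I1, I2, I3 of R fail condition (R). -/
/-! Write elements of `ℤ[2i]` as `a + bi` with `2 ∣ b`. The ideals are cut out by congruences:
`I1 = {2 ∣ a, 4 ∣ b}`, `I2 = {4 ∣ a}`, `I3 = {2 ∣ a, 2 ∣ b, a ≡ b mod 4}`, so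
`H = I1 ∩ I2 ∩ I3 = {4 ∣ a, 4 ∣ b}` has finite index. The element `2i ∈ I2` lies in neither `I1`
nor `I3`, while `2 + a + bi` with `4 ∣ a` lies in `I1` or in `I3` according as `4 ∣ b` or not.
Since `H` lies in every `Ij`, the projection of `I1 ∪ I3` to `R/H` misses the class of `2i`; so the
translates `I1, 2 + I2, I3` project into a proper subset of the projection of `I1 ∪ I2 ∪ I3`. -/

open Zsqrtd

/-- The order `ℤ[2i] = {a + 2bi : a, b ∈ ℤ}` inside the Gaussian integers. -/
def Zadj2i : Subring GaussianInt where
  carrier := {z : GaussianInt | 2 ∣ z.im}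
  zero_mem' := ⟨0, by simp⟩
  one_mem' := ⟨0, by simp⟩
  add_mem' := by
    intro a b ha hb
    simpa [Zsqrtd.im_add] using dvd_add ha hb
  neg_mem' := by
    intro a ha
    simpa [Zsqrtd.im_neg] using ha.neg_right
  mul_mem' := by
    intro a b ha hb
    simp only [Set.mem_setOf_eq, Zsqrtd.im_mul] at *
    exact dvd_add (Dvd.dvd.mul_left hb _) (Dvd.dvd.mul_right ha _)

/-- `2i` as an element of `ℤ[2i]`. -/
def twoI : Zadj2i := ⟨⟨0, 2⟩, ⟨1, rfl⟩⟩

/-- `2 + 2i` as an element of `ℤ[2i]`. -/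
def twoPlusTwoI : Zadj2i := ⟨⟨2, 2⟩, ⟨1, rfl⟩⟩

section ConditionR

variable {R : Type*} [CommRing R]

def SatisfiesConditionR (I J K : Ideal R) : Prop :=
  ∀ a1 a2 a3 : R,
    (Ideal.Quotient.mk (I ⊓ J ⊓ K) '' ((I : Set R) ∪ J ∪ K)).ncard ≤
      (Ideal.Quotient.mk (I ⊓ J ⊓ K) ''
        (((a1 + ·) '' (I : Set R)) ∪ ((a2 + ·) '' (J : Set R)) ∪ ((a3 + ·) '' (K : Set R)))).ncard

theorem Ideal.Quotient.mk_mem_image_iff {H I : Ideal R} (hHI : H ≤ I) {x : R} :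
    Ideal.Quotient.mk H x ∈ Ideal.Quotient.mk H '' I ↔ x ∈ I := by
  refine ⟨?_, fun hx => ⟨x, hx, rfl⟩⟩
  rintro ⟨y, hy, hyx⟩
  have hxy : x - y ∈ I := hHI (Ideal.Quotient.eq.mp hyx.symm)
  simpa using I.add_mem hxy hy

theorem not_satisfiesConditionR_of_image_add_subset {I J K : Ideal R}
    [Finite (R ⧸ (I ⊓ J ⊓ K))] (hJ : ¬ (J : Set R) ⊆ I ∪ K) {a : R}
    (ha : (a + ·) '' (J : Set R) ⊆ I ∪ K) : ¬ SatisfiesConditionR I J K := by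
  intro hR
  have hR := hR 0 a 0
  set π := Ideal.Quotient.mk (I ⊓ J ⊓ K)
  obtain ⟨x, hxJ, hxIK⟩ := Set.not_subset.mp hJ
  have h_translate : π '' (((0 + ·) '' (I : Set R)) ∪ ((a + ·) '' (J : Set R)) ∪
      ((0 + ·) '' (K : Set R))) ⊆ π '' (I ∪ K) := by
    simp only [zero_add, Set.image_id']
    exact Set.image_mono (Set.union_subset (Set.union_subset Set.subset_union_left ha)
      Set.subset_union_right)
  have h_strict : π '' (I ∪ K) ⊂ π '' ((I : Set R) ∪ J ∪ K) := by
    refine (Set.ssubset_iff_of_subset (Set.image_mono ?_)).mpr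
      ⟨π x, ⟨x, Or.inl (Or.inr hxJ), rfl⟩, ?_⟩
    · exact Set.union_subset_union_left _ Set.subset_union_left
    · rw [Set.image_union, Set.mem_union, Ideal.Quotient.mk_mem_image_iff
        (inf_le_left.trans inf_le_left), Ideal.Quotient.mk_mem_image_iff inf_le_right]
      exact hxIK
  have := Set.ncard_lt_ncard h_strict (Set.toFinite _)
  have := Set.ncard_le_ncard h_translate (Set.toFinite _)
  omega

end ConditionR

namespace Zadj2i

def mk (a b : ℤ) : Zadj2i := ⟨⟨a, 2 * b⟩, b, rfl⟩

@[simp] theorem coe_mk (a b : ℤ) : ((mk a b : Zadj2i) : GaussianInt) = ⟨a, 2 * b⟩ := rfl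

@[simp] theorem coe_ofNat (n : ℕ) [n.AtLeastTwo] :
    ((no_index (OfNat.ofNat n) : Zadj2i) : GaussianInt) = OfNat.ofNat n := rfl

@[simp] theorem coe_twoI : ((twoI : Zadj2i) : GaussianInt) = ⟨0, 2⟩ := rfl

@[simp] theorem coe_twoPlusTwoI : ((twoPlusTwoI : Zadj2i) : GaussianInt) = ⟨2, 2⟩ := rfl

theorem two_dvd_im (x : Zadj2i) : 2 ∣ (x : GaussianInt).im := x.2

theorem mem_span_two_iff {x : Zadj2i} :
    x ∈ Ideal.span {(2 : Zadj2i)} ↔ 2 ∣ (x : GaussianInt).re ∧ 4 ∣ (x : GaussianInt).im := by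
  rw [Ideal.mem_span_singleton]
  constructor
  · rintro ⟨c, rfl⟩
    have := two_dvd_im c
    simp only [Subring.coe_mul, coe_ofNat, re_mul, im_mul, re_ofNat, im_ofNat]
    omega
  · rintro ⟨⟨a, ha⟩, ⟨b, hb⟩⟩
    exact ⟨mk a b, Subtype.ext (Zsqrtd.ext (by simp [ha]) (by simp [hb]; ring))⟩

theorem mem_span_twoI_iff {x : Zadj2i} :
    x ∈ Ideal.span {twoI} ↔ 4 ∣ (x : GaussianInt).re ∧ 2 ∣ (x : GaussianInt).im := by
  rw [Ideal.mem_span_singleton]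
  constructor
  · rintro ⟨c, rfl⟩
    have := two_dvd_im c
    simp only [Subring.coe_mul, coe_twoI, re_mul, im_mul]
    omega
  · rintro ⟨⟨a, ha⟩, ⟨b, hb⟩⟩
    exact ⟨mk b (-a), Subtype.ext (Zsqrtd.ext (by simp [ha]; ring) (by simp [hb]))⟩

theorem mem_span_twoPlusTwoI_four_iff {x : Zadj2i} :
    x ∈ Ideal.span {twoPlusTwoI, 4} ↔
      2 ∣ (x : GaussianInt).re ∧ 2 ∣ (x : GaussianInt).im ∧
        4 ∣ (x : GaussianInt).re - (x : GaussianInt).im := by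
  rw [Ideal.mem_span_pair]
  constructor
  · rintro ⟨u, v, rfl⟩
    have := two_dvd_im u
    have := two_dvd_im v
    simp only [Subring.coe_add, Subring.coe_mul, coe_twoPlusTwoI, coe_ofNat, re_add, im_add,
      re_mul, im_mul, re_ofNat, im_ofNat]
    omega
  · rintro ⟨-, ⟨b, hb⟩, ⟨c, hc⟩⟩
    refine ⟨mk b 0, mk c 0, Subtype.ext (Zsqrtd.ext ?_ ?_)⟩ <;>
      simp only [Subring.coe_add, Subring.coe_mul, coe_mk, coe_twoPlusTwoI, coe_ofNat, re_add,
        im_add, re_mul, im_mul, re_ofNat, im_ofNat] <;>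
      omega

theorem mem_inf_iff {x : Zadj2i} :
    x ∈ Ideal.span {(2 : Zadj2i)} ⊓ Ideal.span {twoI} ⊓ Ideal.span {twoPlusTwoI, 4} ↔
      4 ∣ (x : GaussianInt).re ∧ 4 ∣ (x : GaussianInt).im := by
  simp only [Submodule.mem_inf, mem_span_two_iff, mem_span_twoI_iff,
    mem_span_twoPlusTwoI_four_iff]
  omega

instance : Finite (Zadj2i ⧸
    (Ideal.span {(2 : Zadj2i)} ⊓ Ideal.span {twoI} ⊓ Ideal.span {twoPlusTwoI, 4})) := by
  refine Finite.of_surjective (fun p : Fin 4 × Fin 2 => Ideal.Quotient.mk _ (mk p.1 p.2)) ?_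
  intro y
  obtain ⟨x, rfl⟩ := Ideal.Quotient.mk_surjective y
  have := two_dvd_im x
  refine ⟨(⟨((x : GaussianInt).re % 4).toNat, by omega⟩,
    ⟨((x : GaussianInt).im / 2 % 2).toNat, by omega⟩), ?_⟩
  rw [Ideal.Quotient.eq, mem_inf_iff]
  simp only [AddSubgroupClass.coe_sub, coe_mk, re_sub, im_sub]
  omega

theorem span_twoI_not_subset :
    ¬ (Ideal.span {twoI} : Set Zadj2i) ⊆
      (Ideal.span {(2 : Zadj2i)} : Set Zadj2i) ∪ Ideal.span {twoPlusTwoI, 4} := by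
  intro h
  simpa [mem_span_two_iff, mem_span_twoPlusTwoI_four_iff] using
    h (Ideal.mem_span_singleton_self twoI)

theorem image_two_add_span_twoI_subset :
    (2 + ·) '' (Ideal.span {twoI} : Set Zadj2i) ⊆
      (Ideal.span {(2 : Zadj2i)} : Set Zadj2i) ∪ Ideal.span {twoPlusTwoI, 4} := by
  rintro _ ⟨y, hy, rfl⟩
  rw [SetLike.mem_coe, mem_span_twoI_iff] at hy
  simp only [Set.mem_union, SetLike.mem_coe, mem_span_two_iff, mem_span_twoPlusTwoI_four_iff,
    Subring.coe_add, coe_ofNat, re_add, im_add, re_ofNat, im_ofNat]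
  omega

end Zadj2i

/-- In `R = ℤ[2i]`, with `I1 = (2)`, `I2 = (2i)`, `I3 = (2+2i, 4)`:
`I2 ⊄ I1 ∪ I3`, but `2 + I2 ⊆ I1 ∪ I3`. Consequently `I1, I2, I3` fail condition `(R)`:
it is not the case that for all translates the projected union modulo
`I1 ⊓ I2 ⊓ I3` has cardinality at least that of the projected union of the ideals. -/
theorem zadj2i_fails_R :
    ¬ ((Ideal.span {(2 : Zadj2i)} : Set Zadj2i) ∪ (Ideal.span {twoPlusTwoI, 4} : Set Zadj2i) ⊇
        (Ideal.span {twoI} : Set Zadj2i)) ∧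
    ((2 + ·) '' (Ideal.span {twoI} : Set Zadj2i) ⊆
        (Ideal.span {(2 : Zadj2i)} : Set Zadj2i) ∪ (Ideal.span {twoPlusTwoI, 4} : Set Zadj2i)) ∧
    ¬ (∀ a1 a2 a3 : Zadj2i,
        ((Ideal.Quotient.mk (Ideal.span {(2 : Zadj2i)} ⊓ Ideal.span {twoI} ⊓
              Ideal.span {twoPlusTwoI, 4})) ''
            ((Ideal.span {(2 : Zadj2i)} : Set Zadj2i) ∪ (Ideal.span {twoI} : Set Zadj2i) ∪
              (Ideal.span {twoPlusTwoI, 4} : Set Zadj2i))).ncard ≤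
          ((Ideal.Quotient.mk (Ideal.span {(2 : Zadj2i)} ⊓ Ideal.span {twoI} ⊓
              Ideal.span {twoPlusTwoI, 4})) ''
            (((a1 + ·) '' (Ideal.span {(2 : Zadj2i)} : Set Zadj2i)) ∪
              ((a2 + ·) '' (Ideal.span {twoI} : Set Zadj2i)) ∪
              ((a3 + ·) '' (Ideal.span {twoPlusTwoI, 4} : Set Zadj2i)))).ncard) :=
  ⟨Zadj2i.span_twoI_not_subset, Zadj2i.image_two_add_span_twoI_subset,
    not_satisfiesConditionR_of_image_add_subset Zadj2i.span_twoI_not_subset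
      Zadj2i.image_two_add_span_twoI_subset⟩
end

section
/- Let R be a finite commutative ring with a direct product decomposition R ≅ R1 × … × Rk. Then every finite set of ideals of R satisfies condition (R1') if and only if for each i, every finite set of ideals of Ri satisfies (R1'). -/
/-!
Every ideal of `A × B` is a product `I × K`, and translates of products are products of
translates. Counting `⋃ⱼ (Sⱼ × Kⱼ)` fibre by fibre over `A` reduces a translation in the `B`
coordinate to condition (R1') for `B` (applied to the ideals `Kⱼ` with `x ∈ Sⱼ`); translating
one coordinate at a time gives (R1') for `A × B`. Conversely, (R1') for `A` is (R1') for
`A × B` applied to the ideals `Iⱼ × B`, after cancelling the factor `|B|`. Induction on `k`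
then handles `R₁ × ⋯ × R_k`.
-/

/-- A finite commutative ring satisfies condition (R1') if for every finite collection
of ideals `I₁, …, I_r` and all `a₁, …, a_r`, `|⋃ⱼ (aⱼ + Iⱼ)| ≥ |⋃ⱼ Iⱼ|`. -/
def SatisfiesR1' (R : Type*) [CommRing R] : Prop :=
  ∀ (r : ℕ) (I : Fin r → Ideal R) (a : Fin r → R),
    (⋃ j, ((I j : Set R))).ncard ≤ (⋃ j, (a j + ·) '' (I j : Set R)).ncard

open Set

theorem SatisfiesR1'.ncard_iUnion_le {R : Type*} [CommRing R] (h : SatisfiesR1' R)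
    {ι : Type*} [Finite ι] (I : ι → Ideal R) (a : ι → R) :
    (⋃ j, (I j : Set R)).ncard ≤ (⋃ j, (a j + ·) '' (I j : Set R)).ncard := by
  obtain ⟨r, ⟨e⟩⟩ := Finite.exists_equiv_fin ι
  rw [← e.symm.surjective.iUnion_comp, ← e.symm.surjective.iUnion_comp (fun j => _ '' _)]
  exact h r (I ∘ e.symm) (a ∘ e.symm)

theorem satisfiesR1'_of_subsingleton (R : Type*) [CommRing R] [Subsingleton R] :
    SatisfiesR1' R := by
  intro r I a
  have h (x : R) : (x + ·) = id := funext fun _ => Subsingleton.elim _ _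
  simp only [h, image_id, le_refl]

theorem SatisfiesR1'.of_ringEquiv {R S : Type*} [CommRing R] [CommRing S] (h : SatisfiesR1' R)
    (e : R ≃+* S) : SatisfiesR1' S := by
  intro r J a
  have hJ (j) : (J j : Set S) = e '' (J j).comap e := (image_preimage_eq _ e.surjective).symm
  have ha (j) : (a j + ·) '' (J j : Set S) = e '' ((e.symm (a j) + ·) '' (J j).comap e) := by
    rw [hJ j, image_image, image_image]
    simp [map_add]
  rw [iUnion_congr hJ, iUnion_congr ha, ← image_iUnion, ← image_iUnion,
    ncard_image_of_injective _ e.injective, ncard_image_of_injective _ e.injective]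
  exact h r _ _

theorem RingEquiv.satisfiesR1'_iff {R S : Type*} [CommRing R] [CommRing S] (e : R ≃+* S) :
    SatisfiesR1' R ↔ SatisfiesR1' S :=
  ⟨(·.of_ringEquiv e), (·.of_ringEquiv e.symm)⟩

theorem ncard_eq_sum_ncard_preimage_mk {A B : Type*} [Fintype A] [Finite B] (s : Set (A × B)) :
    s.ncard = ∑ x, (Prod.mk x ⁻¹' s).ncard := by
  let e : s ≃ Σ x, (Prod.mk x ⁻¹' s) :=
    { toFun p := ⟨p.1.1, p.1.2, p.2⟩
      invFun q := ⟨(q.1, q.2.1), q.2.2⟩ }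
  rw [← Nat.card_coe_set_eq, Nat.card_congr e, Nat.card_sigma]
  rfl

theorem preimage_mk_iUnion_prod {A B ι : Type*} (S : ι → Set A) (T : ι → Set B) (x : A) :
    Prod.mk x ⁻¹' ⋃ j, S j ×ˢ T j = ⋃ j : {j // x ∈ S j}, T j := by
  ext y
  simp

theorem ncard_iUnion_prod_comm {A B ι : Type*} (S : ι → Set A) (T : ι → Set B) :
    (⋃ j, S j ×ˢ T j).ncard = (⋃ j, T j ×ˢ S j).ncard := by
  rw [← ncard_image_of_injective _ Prod.swap_injective, image_iUnion]
  simp only [image_swap_prod]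

theorem image_add_prod {A B : Type*} [Add A] [Add B] (a : A × B) (s : Set A) (t : Set B) :
    (a + ·) '' (s ×ˢ t) = ((a.1 + ·) '' s) ×ˢ ((a.2 + ·) '' t) := by
  rw [prod_image_image_eq]
  rfl

theorem SatisfiesR1'.ncard_iUnion_prod_le {A B ι : Type*} [Fintype A] [CommRing B] [Finite B]
    [Finite ι] (hB : SatisfiesR1' B) (S : ι → Set A) (K : ι → Ideal B) (b : ι → B) :
    (⋃ j, S j ×ˢ (K j : Set B)).ncard ≤ (⋃ j, S j ×ˢ ((b j + ·) '' (K j : Set B))).ncard := by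
  rw [ncard_eq_sum_ncard_preimage_mk, ncard_eq_sum_ncard_preimage_mk]
  refine Finset.sum_le_sum fun x _ => ?_
  simp only [preimage_mk_iUnion_prod]
  exact hB.ncard_iUnion_le (fun j : {j // x ∈ S j} => K j) (fun j => b j)

theorem SatisfiesR1'.prod {A B : Type*} [CommRing A] [Finite A] [CommRing B] [Finite B]
    (hA : SatisfiesR1' A) (hB : SatisfiesR1' B) : SatisfiesR1' (A × B) := by
  have := Fintype.ofFinite A
  have := Fintype.ofFinite B
  intro r J a
  set I := fun j => (J j).map (RingHom.fst A B)
  set K := fun j => (J j).map (RingHom.snd A B)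
  have hJ (j) : (J j : Set (A × B)) = (I j : Set A) ×ˢ (K j : Set B) := by
    rw [← Ideal.coe_prod, ← Ideal.ideal_prod_eq]
  calc (⋃ j, (J j : Set (A × B))).ncard
      = (⋃ j, (I j : Set A) ×ˢ (K j : Set B)).ncard := by rw [iUnion_congr hJ]
    _ ≤ (⋃ j, (I j : Set A) ×ˢ (((a j).2 + ·) '' (K j : Set B))).ncard :=
        hB.ncard_iUnion_prod_le _ K _
    _ = (⋃ j, (((a j).2 + ·) '' (K j : Set B)) ×ˢ (I j : Set A)).ncard :=
        ncard_iUnion_prod_comm _ _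
    _ ≤ (⋃ j, (((a j).2 + ·) '' (K j : Set B)) ×ˢ (((a j).1 + ·) '' (I j : Set A))).ncard :=
        hA.ncard_iUnion_prod_le _ I _
    _ = (⋃ j, (a j + ·) '' (J j : Set (A × B))).ncard := by
        rw [ncard_iUnion_prod_comm]
        simp only [hJ, image_add_prod]

theorem SatisfiesR1'.of_prod_left {A B : Type*} [CommRing A] [CommRing B] [Finite B]
    (h : SatisfiesR1' (A × B)) : SatisfiesR1' A := by
  intro r I a
  have hprod := h r (fun j => (I j).prod ⊤) (fun j => (a j, 0))
  simp only [Ideal.coe_prod, Submodule.top_coe, image_add_prod, zero_add, image_id',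
    ← iUnion_prod_const, ncard_prod] at hprod
  exact Nat.le_of_mul_le_mul_right hprod Nat.card_pos

theorem SatisfiesR1'.of_prod_right {A B : Type*} [CommRing A] [Finite A] [CommRing B]
    (h : SatisfiesR1' (A × B)) : SatisfiesR1' B :=
  (h.of_ringEquiv (RingEquiv.prodComm)).of_prod_left

def RingEquiv.piFinSucc {k : ℕ} (Rs : Fin (k + 1) → Type*) [∀ i, CommRing (Rs i)] :
    (∀ i, Rs i) ≃+* Rs 0 × ∀ i : Fin k, Rs i.succ :=
  { (Fin.consEquiv Rs).symm with
    map_mul' _ _ := rfl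
    map_add' _ _ := rfl }

theorem satisfiesR1'_pi_fin_iff : ∀ {k : ℕ} (Rs : Fin k → Type*) [∀ i, CommRing (Rs i)]
    [∀ i, Finite (Rs i)], SatisfiesR1' (∀ i, Rs i) ↔ ∀ i, SatisfiesR1' (Rs i)
  | 0, Rs, _, _ => iff_of_true (satisfiesR1'_of_subsingleton _) finZeroElim
  | k + 1, Rs, _, _ => by
    rw [(RingEquiv.piFinSucc Rs).satisfiesR1'_iff, Fin.forall_fin_succ,
      ← satisfiesR1'_pi_fin_iff fun i : Fin k => Rs i.succ]
    exact ⟨fun h => ⟨h.of_prod_left, h.of_prod_right⟩, fun h => h.1.prod h.2⟩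

theorem satisfiesR1'_pi_iff_general (R : Type*) [CommRing R]
    (k : ℕ) (Rs : Fin k → Type*) [∀ i, CommRing (Rs i)] [∀ i, Finite (Rs i)]
    (e : R ≃+* ∀ i, Rs i) :
    SatisfiesR1' R ↔ ∀ i, SatisfiesR1' (Rs i) := by
  rw [e.satisfiesR1'_iff, satisfiesR1'_pi_fin_iff]

/-- If a finite commutative ring `R` decomposes as `R ≅ R₁ × ⋯ × R_k`,
then every finite set of ideals of `R` satisfies (R1') iff for each `i`, every finite set
of ideals of `Rᵢ` satisfies (R1'). -/
theorem satisfiesR1'_pi_iff (R : Type*) [CommRing R] [Finite R]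
    (k : ℕ) (Rs : Fin k → Type*) [∀ i, CommRing (Rs i)] [∀ i, Finite (Rs i)]
    (e : R ≃+* ∀ i, Rs i) :
    SatisfiesR1' R ↔ ∀ i, SatisfiesR1' (Rs i) :=
  satisfiesR1'_pi_iff_general R k Rs e
end

section
/- Let R be a finite commutative local ring with at least two distinct minimal nonzero ideals. Then there exist three ideals I1, I2, I3 of R and elements a1, a2, a3 ∈ R such that |(a1+I1) ∪ (a2+I2) ∪ (a3+I3)| < |I1 ∪ I2 ∪ I3|. -/
/-!
A minimal ideal of a local ring is killed by the maximal ideal `m`. Hence for nonzero `x ∈ I` and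
`y ∈ J` the element `x + y` is also killed by `m`, so it spans a third minimal ideal `K`, and
`I`, `J`, `K` pairwise meet only in `0`. Thus `I ∪ J ∪ K` has `|I| + |J| + |K| - 2` elements.
Replacing `J` by the coset `x + J` creates three distinct overlap points `0 ∈ I ∩ K`,
`x ∈ I ∩ (x + J)` and `x + y ∈ (x + J) ∩ K`, so `I ∪ (x + J) ∪ K` has only
`|I| + |J| + |K| - 3`.
-/

theorem Set.ncard_union_union_add_ncard_inter {α : Type*} {S T U : Set α}
    (hS : S.Finite) (hT : T.Finite) (hU : U.Finite) :
    (S ∪ T ∪ U).ncard + (S ∩ T).ncard + ((S ∪ T) ∩ U).ncard =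
      S.ncard + T.ncard + U.ncard := by
  have := Set.ncard_union_add_ncard_inter _ _ (hS.union hT) hU
  have := Set.ncard_union_add_ncard_inter _ _ hS hT
  omega

namespace AddSubgroup

variable {G : Type*} [AddGroup G]

theorem coe_inter_eq_singleton_zero {A B : AddSubgroup G} (h : Disjoint A B) :
    (A : Set G) ∩ B = {0} := by
  rw [← coe_inf, h.eq_bot, coe_bot]

theorem image_add_inter_eq_singleton {B C : AddSubgroup G} (h : Disjoint B C) {x y : G}
    (hy : y ∈ B) (hxy : x + y ∈ C) : (x + ·) '' (B : Set G) ∩ C = {x + y} := by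
  refine Set.eq_singleton_iff_unique_mem.2 ⟨⟨⟨y, hy, rfl⟩, hxy⟩, ?_⟩
  rintro _ ⟨⟨b, hb, rfl⟩, hxb⟩
  have hyb : -y + b ∈ C := by
    simpa [← add_assoc] using C.add_mem (C.neg_mem hxy) hxb
  rw [disjoint_def.1 h (B.add_mem (B.neg_mem hy) hb) hyb |> neg_add_eq_zero.1]

theorem ncard_union_image_add_union_lt [Finite G] {A B C : AddSubgroup G}
    (hAB : Disjoint A B) (hAC : Disjoint A C) (hBC : Disjoint B C) {x y : G}
    (hx : x ∈ A) (hy : y ∈ B) (hxy : x + y ∈ C) (hxy₀ : x + y ≠ 0) :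
    ((A : Set G) ∪ (x + ·) '' (B : Set G) ∪ C).ncard < ((A : Set G) ∪ B ∪ C).ncard := by
  have hshift := Set.ncard_union_union_add_ncard_inter (S := (A : Set G))
    (T := (x + ·) '' (B : Set G)) (U := (C : Set G)) (Set.toFinite _) (Set.toFinite _)
    (Set.toFinite _)
  have hsub := Set.ncard_union_union_add_ncard_inter (S := (A : Set G)) (T := (B : Set G))
    (U := (C : Set G)) (Set.toFinite _) (Set.toFinite _) (Set.toFinite _)
  rw [Set.ncard_image_of_injective _ (add_right_injective x), Set.inter_comm,
    image_add_inter_eq_singleton hAB.symm B.zero_mem (by rwa [add_zero]),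
    Set.union_inter_distrib_right, coe_inter_eq_singleton_zero hAC,
    image_add_inter_eq_singleton hBC hy hxy, Set.singleton_union, Set.ncard_singleton,
    Set.ncard_pair hxy₀.symm] at hshift
  rw [Set.union_inter_distrib_right, coe_inter_eq_singleton_zero hAB,
    coe_inter_eq_singleton_zero hAC, coe_inter_eq_singleton_zero hBC, Set.union_self,
    Set.ncard_singleton] at hsub
  omega

end AddSubgroup

namespace IsLocalRing

variable {R : Type*} [CommRing R] [IsLocalRing R]

theorem mul_eq_zero_of_isAtom {I : Ideal R} (hI : IsAtom I) {r x : R}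
    (hr : r ∈ maximalIdeal R) (hx : x ∈ I) : r * x = 0 := by
  by_contra hrx
  have hspan : Ideal.span {r * x} = I :=
    hI.le_iff_eq (by rwa [Ne, Ideal.span_singleton_eq_bot]) |>.1
      ((Ideal.span_singleton_le_iff_mem _).2 (I.mul_mem_left r hx))
  obtain ⟨s, hs⟩ := Ideal.mem_span_singleton'.1 (hspan ▸ hx)
  have hunit : IsUnit (1 - s * r) :=
    isUnit_one_sub_self_of_mem_nonunits _ ((maximalIdeal R).mul_mem_left s hr)
  have : (1 - s * r) * x = 0 := by linear_combination -hs
  exact hrx (by rw [hunit.mul_right_eq_zero.1 this, mul_zero])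

theorem isAtom_span_singleton {z : R} (hz : z ≠ 0) (hmz : ∀ r ∈ maximalIdeal R, r * z = 0) :
    IsAtom (Ideal.span {z}) := by
  refine ⟨by rwa [Ne, Ideal.span_singleton_eq_bot], fun L hL => ?_⟩
  by_contra hL₀
  obtain ⟨w, hwL, hw₀⟩ := (Submodule.ne_bot_iff L).1 hL₀
  obtain ⟨a, rfl⟩ := Ideal.mem_span_singleton'.1 (hL.le hwL)
  obtain ⟨u, rfl⟩ : IsUnit a := by
    by_contra ha
    exact hw₀ (hmz a ((mem_maximalIdeal a).2 ha))
  have hzL : z ∈ L := by simpa [← mul_assoc] using L.mul_mem_left (↑u⁻¹ : R) hwL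
  exact hL.not_ge ((Ideal.span_singleton_le_iff_mem _).2 hzL)

end IsLocalRing

/-- A finite commutative local ring `R` with at least two distinct
minimal nonzero ideals admits three ideals `I1, I2, I3` and elements `a1, a2, a3` with
`|(a1+I1) ∪ (a2+I2) ∪ (a3+I3)| < |I1 ∪ I2 ∪ I3|`. -/
theorem two_minimal_ideals_fail_R (R : Type*) [CommRing R] [Finite R] [IsLocalRing R]
    (I J : Ideal R) (hIJ : I ≠ J)
    (hI : I ≠ ⊥) (hImin : ∀ K : Ideal R, K ≠ ⊥ → K ≤ I → K = I)
    (hJ : J ≠ ⊥) (hJmin : ∀ K : Ideal R, K ≠ ⊥ → K ≤ J → K = J) :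
    ∃ (I1 I2 I3 : Ideal R) (a1 a2 a3 : R),
      (((a1 + ·) '' (I1 : Set R)) ∪ ((a2 + ·) '' (I2 : Set R)) ∪
          ((a3 + ·) '' (I3 : Set R))).ncard <
        ((I1 : Set R) ∪ (I2 : Set R) ∪ (I3 : Set R)).ncard := by
  have hIa : IsAtom I := isAtom_iff_le_of_ge.2 ⟨hI, fun K hK hKI => (hImin K hK hKI).ge⟩
  have hJa : IsAtom J := isAtom_iff_le_of_ge.2 ⟨hJ, fun K hK hKJ => (hJmin K hK hKJ).ge⟩
  have hdisj : ∀ {A B : Ideal R}, Disjoint A B → Disjoint A.toAddSubgroup B.toAddSubgroup :=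
    fun h => AddSubgroup.disjoint_def.2 (Submodule.disjoint_def.1 h _)
  obtain ⟨x, hxI, hx₀⟩ := (Submodule.ne_bot_iff I).1 hI
  obtain ⟨y, hyJ, hy₀⟩ := (Submodule.ne_bot_iff J).1 hJ
  have hIJd : Disjoint I J := hIa.disjoint_of_ne hJa hIJ
  have hxy₀ : x + y ≠ 0 := fun h =>
    hx₀ (Submodule.disjoint_def.1 hIJd x hxI (eq_neg_of_add_eq_zero_left h ▸ J.neg_mem hyJ))
  set K := Ideal.span {x + y}
  have hxyK : x + y ∈ K := Ideal.mem_span_singleton_self _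
  have hKa : IsAtom K := IsLocalRing.isAtom_span_singleton hxy₀ fun r hr => by
    rw [mul_add, IsLocalRing.mul_eq_zero_of_isAtom hIa hr hxI,
      IsLocalRing.mul_eq_zero_of_isAtom hJa hr hyJ, add_zero]
  have hIK : I ≠ K := by
    rintro rfl
    exact hy₀ (Submodule.disjoint_def.1 hIJd y (by simpa using sub_mem hxyK hxI) hyJ)
  have hJK : J ≠ K := by
    rintro rfl
    exact hx₀ (Submodule.disjoint_def.1 hIJd x hxI (by simpa using sub_mem hxyK hyJ))
  refine ⟨I, J, K, 0, x, 0, ?_⟩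
  simp only [zero_add, Set.image_id']
  exact AddSubgroup.ncard_union_image_add_union_lt (hdisj hIJd)
    (hdisj (hIa.disjoint_of_ne hKa hIK)) (hdisj (hJa.disjoint_of_ne hKa hJK)) hxI hyJ hxyK hxy₀
end

section
/- A finite commutative local ring R has totally ordered ideals if and only if every finite collection of ideals of R satisfies (R1'): for all ideals I1,…,Ir and all a1,…,ar ∈ R, |∪_j (aj + Ij)| ≥ |∪_j Ij|. -/
theorem satisfiesR1'_of_total {R : Type*} [CommRing R] [Finite R]
    (h : ∀ I J : Ideal R, I ≤ J ∨ J ≤ I) : SatisfiesR1' R := by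
  intro r I a
  rcases isEmpty_or_nonempty (Fin r) with _ | _
  · simp
  obtain ⟨k, hk⟩ : ∃ k, ∀ j, I j ≤ I k := by
    have hdir : Directed (· ≤ ·) I := fun i j =>
      (h (I i) (I j)).elim (fun hij => ⟨j, hij, le_rfl⟩) fun hji => ⟨i, le_rfl, hji⟩
    simpa using hdir.finset_le Finset.univ
  have hU : (⋃ j, (I j : Set R)) = I k :=
    (Set.iUnion_subset fun j => hk j).antisymm (Set.subset_iUnion (fun j => (I j : Set R)) k)
  calc (⋃ j, (I j : Set R)).ncard = ((a k + ·) '' (I k : Set R)).ncard := by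
        rw [hU, Set.ncard_image_of_injective _ (add_right_injective (a k))]
    _ ≤ _ := Set.ncard_le_ncard (Set.subset_iUnion (fun j => (a j + ·) '' (I j : Set R)) k)

theorem Set.ncard_union_lt_ncard_union_of_ncard_inter_lt {α : Type*} [Finite α] {A S T : Set α}
    (hST : S.ncard = T.ncard) (h : (A ∩ S).ncard < (A ∩ T).ncard) :
    (A ∪ T).ncard < (A ∪ S).ncard := by
  have hS := Set.ncard_union_add_ncard_inter A S
  have hT := Set.ncard_union_add_ncard_inter A T
  omega

namespace IsLocalRing

variable {R : Type*} [CommRing R] [IsLocalRing R]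

theorem exists_isUnit_mul_pow_of_maximalIdeal_eq_span {t : R}
    (ht : maximalIdeal R = Ideal.span {t}) (hnil : IsNilpotent t) (x : R) :
    ∃ c : R, ∃ k : ℕ, IsUnit c ∧ x = c * t ^ k := by
  obtain ⟨n, hn⟩ := hnil
  suffices h : ∀ k ≤ n, t ^ k ∣ x → ∃ c : R, ∃ k : ℕ, IsUnit c ∧ x = c * t ^ k from
    h 0 n.zero_le (pow_zero t ▸ one_dvd x)
  intro k hk
  induction hk using Nat.decreasingInduction with
  | self => rintro ⟨c, rfl⟩; exact ⟨1, n, isUnit_one, by simp [hn]⟩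
  | of_succ k _ ih =>
    rintro ⟨c, rfl⟩
    by_cases hc : c ∈ maximalIdeal R
    · rw [ht, Ideal.mem_span_singleton] at hc
      obtain ⟨d, rfl⟩ := hc
      exact ih ⟨d, by ring⟩
    · exact ⟨c, k, notMem_maximalIdeal.mp hc, mul_comm _ _⟩

theorem preValuationRing_of_isPrincipal_maximalIdeal [Ring.KrullDimLE 0 R]
    (h : (maximalIdeal R).IsPrincipal) : PreValuationRing R := by
  obtain ⟨t, ht⟩ := h.principal
  have hnil : IsNilpotent t := Ring.KrullDimLE.isNilpotent_iff_mem_maximalIdeal.mpr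
    (ht ▸ Submodule.mem_span_singleton_self t)
  refine PreValuationRing.iff_dvd_total.mpr ⟨fun x y => ?_⟩
  obtain ⟨c, i, hc, rfl⟩ := exists_isUnit_mul_pow_of_maximalIdeal_eq_span ht hnil x
  obtain ⟨d, j, hd, rfl⟩ := exists_isUnit_mul_pow_of_maximalIdeal_eq_span ht hnil y
  rw [hc.mul_left_dvd, hd.dvd_mul_left, hd.mul_left_dvd, hc.dvd_mul_left]
  exact (le_total i j).imp (pow_dvd_pow t) (pow_dvd_pow t)

theorem exists_notMem_span_singleton_sup_sq [IsNoetherianRing R]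
    (hm : ¬ (maximalIdeal R).IsPrincipal) {t : R} (ht : t ∈ maximalIdeal R) :
    ∃ x ∈ maximalIdeal R, x ∉ Ideal.span {t} ⊔ maximalIdeal R ^ 2 := by
  by_contra! h
  refine hm ⟨t, le_antisymm ?_ (Ideal.span_le.mpr (Set.singleton_subset_iff.mpr ht))⟩
  refine Submodule.le_of_le_smul_of_le_jacobson_bot (IsNoetherian.noetherian _)
    (jacobson_eq_maximalIdeal ⊥ bot_ne_top).ge ?_
  rwa [Ideal.smul_eq_mul, ← sq]

theorem exists_pair_independent_mod_sq [IsNoetherianRing R]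
    (hm : ¬ (maximalIdeal R).IsPrincipal) :
    ∃ u ∈ maximalIdeal R, ∃ v ∈ maximalIdeal R, ∀ a b : R,
      a * u + b * v ∈ maximalIdeal R ^ 2 → a ∈ maximalIdeal R ∧ b ∈ maximalIdeal R := by
  obtain ⟨u, hu, hu0⟩ := exists_notMem_span_singleton_sup_sq hm (zero_mem _)
  rw [Ideal.span_singleton_eq_bot.mpr rfl, bot_sup_eq] at hu0
  obtain ⟨v, hv, hvu⟩ := exists_notMem_span_singleton_sup_sq hm hu
  refine ⟨u, hu, v, hv, fun a b hab => ?_⟩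
  have hb : b ∈ maximalIdeal R := by
    by_contra hb
    refine hvu ((Ideal.unit_mul_mem_iff_mem _ (notMem_maximalIdeal.mp hb)).mp ?_)
    exact Ideal.mem_span_singleton_sup.mpr ⟨-a, _, hab, by ring⟩
  have hbv : b * v ∈ maximalIdeal R ^ 2 := sq (maximalIdeal R) ▸ Ideal.mul_mem_mul hb hv
  have hau : a * u ∈ maximalIdeal R ^ 2 := by
    simpa only [add_sub_cancel_right] using sub_mem hab hbv
  refine ⟨?_, hb⟩
  by_contra ha
  exact hu0 ((Ideal.unit_mul_mem_iff_mem _ (notMem_maximalIdeal.mp ha)).mp hau)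

/-- The ideal `L_w` of the header: the preimage of the line through `w` in `𝔪/𝔪²`. -/
def lineModSq (w : R) : Ideal R := Ideal.span {w} ⊔ maximalIdeal R ^ 2

theorem mem_lineModSq {w x : R} :
    x ∈ lineModSq w ↔ ∃ a, ∃ z ∈ maximalIdeal R ^ 2, a * w + z = x :=
  Ideal.mem_span_singleton_sup

variable {u v : R}

theorem lineModSq_union_inter_subset (huv : u + v ∈ maximalIdeal R)
    (hind : ∀ a b : R, a * u + b * v ∈ maximalIdeal R ^ 2 →
      a ∈ maximalIdeal R ∧ b ∈ maximalIdeal R) :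
    ((lineModSq u : Set R) ∪ lineModSq v) ∩ lineModSq (u + v) ⊆
      (maximalIdeal R ^ 2 : Ideal R) := by
  rintro x ⟨hx, hxuv⟩
  obtain ⟨c, z, hz, rfl⟩ := mem_lineModSq.mp hxuv
  suffices hc : c ∈ maximalIdeal R from
    add_mem (sq (maximalIdeal R) ▸ Ideal.mul_mem_mul hc huv) hz
  rcases hx with hx | hx <;> obtain ⟨d, w, hw, hdw⟩ := mem_lineModSq.mp hx
  · have he : (c - d) * u + c * v = w - z := by linear_combination -hdw
    exact (hind _ _ (he ▸ sub_mem hw hz)).2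
  · have he : c * u + (c - d) * v = w - z := by linear_combination -hdw
    exact (hind _ _ (he ▸ sub_mem hw hz)).1

theorem translates_subset_lineModSq :
    (-u + ·) '' (maximalIdeal R ^ 2 : Ideal R) ∪ (v + ·) '' (maximalIdeal R ^ 2 : Ideal R) ⊆
      ((lineModSq u : Set R) ∪ lineModSq v) ∩ (v + ·) '' lineModSq (u + v) := by
  rintro _ (⟨z, hz, rfl⟩ | ⟨z, hz, rfl⟩)
  · exact ⟨Or.inl (mem_lineModSq.mpr ⟨-1, z, hz, by ring⟩),
      ⟨-(u + v) + z, mem_lineModSq.mpr ⟨-1, z, hz, by ring⟩, by ring⟩⟩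
  · exact ⟨Or.inr (mem_lineModSq.mpr ⟨1, z, hz, by ring⟩),
      ⟨z, mem_lineModSq.mpr ⟨0, z, hz, by ring⟩, rfl⟩⟩

theorem not_satisfiesR1'_of_independent_mod_sq [Finite R] (hu : u ∈ maximalIdeal R)
    (hv : v ∈ maximalIdeal R) (hind : ∀ a b : R, a * u + b * v ∈ maximalIdeal R ^ 2 →
      a ∈ maximalIdeal R ∧ b ∈ maximalIdeal R) :
    ¬ SatisfiesR1' R := by
  set N : Set R := ↑(maximalIdeal R ^ 2)
  set A : Set R := (lineModSq u : Set R) ∪ lineModSq v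
  set S : Set R := ↑(lineModSq (u + v))
  have hdisj : Disjoint ((-u + ·) '' N) ((v + ·) '' N) := by
    refine Set.disjoint_left.mpr ?_
    rintro _ ⟨z, hz, rfl⟩ ⟨z', hz', he⟩
    have h1 : 1 * u + 1 * v = z - z' := by linear_combination he
    exact (notMem_maximalIdeal.mpr isUnit_one) (hind 1 1 (h1 ▸ sub_mem hz hz')).1
  have hlt : (A ∩ S).ncard < (A ∩ (v + ·) '' S).ncard := calc
    (A ∩ S).ncard ≤ N.ncard :=
      Set.ncard_le_ncard (lineModSq_union_inter_subset (add_mem hu hv) hind)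
    _ < N.ncard + N.ncard := Nat.lt_add_of_pos_right ((Set.ncard_pos).mpr ⟨0, zero_mem _⟩)
    _ = ((-u + ·) '' N ∪ (v + ·) '' N).ncard := by
      rw [Set.ncard_union_eq hdisj, Set.ncard_image_of_injective _ (add_right_injective _),
        Set.ncard_image_of_injective _ (add_right_injective _)]
    _ ≤ (A ∩ (v + ·) '' S).ncard := Set.ncard_le_ncard translates_subset_lineModSq
  intro hR1
  have hunion : ∀ s : Fin 3 → Set R, ⋃ j, s j = s 0 ∪ s 1 ∪ s 2 := fun s => by
    ext; simp [Fin.exists_fin_succ, or_assoc]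
  have h := hR1 3 ![lineModSq u, lineModSq v, lineModSq (u + v)] ![0, 0, v]
  rw [hunion, hunion] at h
  simp only [Matrix.cons_val_zero, Matrix.cons_val_one, Matrix.cons_val_two, zero_add,
    Set.image_id'] at h
  exact (Set.ncard_union_lt_ncard_union_of_ncard_inter_lt
    (Set.ncard_image_of_injective _ (add_right_injective v)).symm hlt).not_ge h

end IsLocalRing

open IsLocalRing

/-- A finite commutative local ring `R` has totally ordered ideals if
and only if every finite collection of ideals of `R` satisfies (R1'). -/
theorem local_ring_R1'_iff_chain (R : Type*) [CommRing R] [Finite R] [IsLocalRing R] :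
    (∀ I J : Ideal R, I ≤ J ∨ J ≤ I) ↔ SatisfiesR1' R := by
  refine ⟨satisfiesR1'_of_total, fun hR1 => ?_⟩
  by_contra htotal
  have hm : ¬ (maximalIdeal R).IsPrincipal := fun hm => htotal
    (PreValuationRing.iff_ideal_total.mp (preValuationRing_of_isPrincipal_maximalIdeal hm)).total
  obtain ⟨u, hu, v, hv, hind⟩ := exists_pair_independent_mod_sq hm
  exact not_satisfiesR1'_of_independent_mod_sq hu hv hind hR1
end

section
/- Let R be a one-dimensional Noetherian domain such that for every nonzero ideal I, the quotient R/I is a finite direct product of local rings with linearly ordered ideals. Then for every nonzero prime ideal p of R, the localization R_p has totally ordered ideals (i.e., is a valuation ring), and hence R is integrally closed, so R is a Dedekind domain. -/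
/-!
Every nonzero ideal of the one-dimensional local domain `R_p` contains a power of its maximal
ideal `pR_p`, so two ideals of `R_p` compare as their contractions to `R` do, and these contain
some `p ^ n`. Since `p` is maximal, `R ⧸ p ^ n` is local, and a local ring has no nontrivial
idempotents, so the given product decomposition of `R ⧸ p ^ n` has a single factor: the ideals
of `R ⧸ p ^ n` are totally ordered. Thus every `R_p` is a valuation ring, hence integrally
closed, and `R` is a Noetherian integrally closed domain of dimension one.
-/

universe u

theorem Ideal.Quotient.isLocalRing_of_isMaximal_radical {R : Type*} [CommRing R] {I : Ideal R}
    (hI : I.radical.IsMaximal) : IsLocalRing (R ⧸ I) := by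
  have hmk := Ideal.Quotient.mk_surjective (I := I)
  have hker : RingHom.ker (Ideal.Quotient.mk I) ≤ I.radical :=
    Ideal.mk_ker.trans_le I.le_radical
  refine .of_unique_max_ideal ⟨_, hI.map_of_surjective_of_ker_le hmk hker, fun M hM => ?_⟩
  have hM' := Ideal.comap_isMaximal_of_surjective _ hmk (K := M)
  have hIM : I ≤ M.comap (Ideal.Quotient.mk I) := Ideal.mk_ker.ge.trans (Ideal.ker_le_comap _)
  rw [hI.eq_of_le hM'.ne_top (hM'.isPrime.radical_le_iff.mpr hIM),
    Ideal.map_comap_of_surjective _ hmk]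

theorem Pi.nonempty_unique_of_isLocalRing {ι : Type*} {Rs : ι → Type*} [∀ i, CommRing (Rs i)]
    [∀ i, Nontrivial (Rs i)] [IsLocalRing (∀ i, Rs i)] : Nonempty (Unique ι) := by
  obtain _ | ⟨⟨i⟩⟩ := isEmpty_or_nonempty ι
  · have := Pi.uniqueOfIsEmpty Rs
    exact (not_subsingleton (∀ i, Rs i) inferInstance).elim
  classical
  refine ⟨{ default := i, uniq := fun j => by_contra fun hji => ?_ }⟩
  rcases IsLocalRing.isUnit_or_isUnit_one_sub_self (Pi.single i (1 : Rs i)) with h | h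
  · simpa [hji] using h.map (Pi.evalRingHom Rs j)
  · simpa using h.map (Pi.evalRingHom Rs i)

theorem Ideal.le_total_of_ker_le {S T : Type*} [CommRing S] [CommRing T] {f : S →+* T}
    (hf : Function.Surjective f) (h : ∀ A B : Ideal T, A ≤ B ∨ B ≤ A) {a b : Ideal S}
    (ha : RingHom.ker f ≤ a) (hb : RingHom.ker f ≤ b) : a ≤ b ∨ b ≤ a := by
  have hcomap {c : Ideal S} (hc : RingHom.ker f ≤ c) : (c.map f).comap f = c := by
    rw [Ideal.comap_map_of_surjective _ hf, ← RingHom.ker_eq_comap_bot, sup_of_le_left hc]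
  rcases h (a.map f) (b.map f) with hab | hba
  · exact .inl (by simpa only [hcomap ha, hcomap hb] using Ideal.comap_mono (f := f) hab)
  · exact .inr (by simpa only [hcomap ha, hcomap hb] using Ideal.comap_mono (f := f) hba)

theorem IsLocalRing.exists_maximalIdeal_pow_le {S : Type*} [CommRing S] [IsLocalRing S]
    [IsNoetherianRing S] [Ring.DimensionLEOne S] {C : Ideal S} (hC : C ≠ ⊥) :
    ∃ n, maximalIdeal S ^ n ≤ C := by
  refine Ideal.exists_pow_le_of_le_radical_of_fg ?_ (IsNoetherian.noetherian _)
  rw [Ideal.radical_eq_sInf]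
  exact le_sInf fun Q ⟨hCQ, hQ⟩ =>
    (eq_maximalIdeal (hQ.isMaximal (ne_bot_of_le_ne_bot hC hCQ))).ge

theorem Ideal.le_total_of_ringEquiv_pi {S : Type*} [CommRing S] [IsLocalRing S] {ι : Type*}
    {Rs : ι → Type*} [∀ i, CommRing (Rs i)] [∀ i, IsLocalRing (Rs i)] (e : S ≃+* ∀ i, Rs i)
    (h : ∀ i, ∀ A B : Ideal (Rs i), A ≤ B ∨ B ≤ A) (a b : Ideal S) : a ≤ b ∨ b ≤ a := by
  have := e.isLocalRing
  obtain ⟨_⟩ := Pi.nonempty_unique_of_isLocalRing (Rs := Rs)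
  let f : S →+* Rs default := (Pi.evalRingHom Rs default).comp e
  have hf : RingHom.ker f = ⊥ := (RingHom.injective_iff_ker_eq_bot f).mp fun x y hxy =>
    e.injective (funext fun j => by rw [Unique.eq_default j]; exact hxy)
  exact Ideal.le_total_of_ker_le ((Function.surjective_eval default).comp e.surjective)
    (h default) (hf ▸ bot_le) (hf ▸ bot_le)

theorem Localization.AtPrime.ideal_le_total_of_quotient_pow {R : Type*} [CommRing R]
    [IsDomain R] [IsNoetherianRing R] [Ring.DimensionLEOne R] (p : Ideal R) [p.IsPrime]
    (h : ∀ n ≠ 0, ∀ a b : Ideal (R ⧸ p ^ n), a ≤ b ∨ b ≤ a)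
    (A B : Ideal (Localization.AtPrime p)) : A ≤ B ∨ B ≤ A := by
  have : IsDomain (Localization.AtPrime p) :=
    IsLocalization.isDomain_localization p.primeCompl_le_nonZeroDivisors
  have : Ring.DimensionLEOne (Localization.AtPrime p) :=
    .localization _ p.primeCompl_le_nonZeroDivisors
  rcases eq_or_ne A ⊥ with rfl | hA
  · exact .inl bot_le
  rcases eq_or_ne B ⊥ with rfl | hB
  · exact .inr bot_le
  obtain ⟨n, hn⟩ := IsLocalRing.exists_maximalIdeal_pow_le (C := A * B)
    (Ideal.mul_eq_bot.not.mpr (not_or.mpr ⟨hA, hB⟩))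
  have hpow {C : Ideal (Localization.AtPrime p)} (hC : A * B ≤ C) :
      RingHom.ker (Ideal.Quotient.mk (p ^ (n + 1))) ≤ C.under R := by
    rw [Ideal.mk_ker, ← Ideal.map_le_iff_le_comap, Ideal.map_pow,
      Localization.AtPrime.map_eq_maximalIdeal]
    exact (Ideal.pow_le_pow_right n.le_succ).trans (hn.trans hC)
  have hmap := IsLocalization.map_under p.primeCompl (Localization.AtPrime p)
  rcases Ideal.le_total_of_ker_le Ideal.Quotient.mk_surjective (h (n + 1) n.succ_ne_zero)
    (hpow Ideal.mul_le_left) (hpow Ideal.mul_le_right) with hAB | hBA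
  · exact .inl (hmap A ▸ hmap B ▸ Ideal.map_mono hAB)
  · exact .inr (hmap A ▸ hmap B ▸ Ideal.map_mono hBA)

/-- Let `R` be a one-dimensional Noetherian domain such that for every
nonzero ideal `I` the quotient `R ⧸ I` is a finite direct product of local rings with
linearly ordered ideals. Then for every nonzero prime `p` the localization `R_p` has
totally ordered ideals (i.e. is a valuation ring), hence `R` is integrally closed, so
`R` is a Dedekind domain. -/
theorem dedekind_of_quotients_products_of_chain_local (R : Type u) [CommRing R]
    [IsDomain R] [IsNoetherianRing R] (hdim : ringKrullDim R = 1)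
    (hquot : ∀ I : Ideal R, I ≠ ⊥ →
      ∃ (k : ℕ) (Rs : Fin k → Type u) (_ : ∀ i, CommRing (Rs i)),
        Nonempty ((R ⧸ I) ≃+* ∀ i, Rs i) ∧
          ∀ i, IsLocalRing (Rs i) ∧ ∀ A B : Ideal (Rs i), A ≤ B ∨ B ≤ A) :
    (∀ (p : Ideal R) [p.IsPrime], p ≠ ⊥ →
        ∀ A B : Ideal (Localization.AtPrime p), A ≤ B ∨ B ≤ A) ∧
      IsIntegrallyClosed R ∧ IsDedekindDomain R := by
  have : Ring.KrullDimLE 1 R := Ring.krullDimLE_iff.mpr hdim.le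
  have : Ring.DimensionLEOne R := ⟨fun hp hp' => hp'.isMaximal_of_ne_bot hp⟩
  have hchain (p : Ideal R) [hp' : p.IsPrime] (hp : p ≠ ⊥) :
      ∀ A B : Ideal (Localization.AtPrime p), A ≤ B ∨ B ≤ A := by
    refine Localization.AtPrime.ideal_le_total_of_quotient_pow p fun n hn => ?_
    obtain ⟨k, Rs, _, ⟨e⟩, hRs⟩ := hquot (p ^ n) (pow_ne_zero n hp)
    have := fun i => (hRs i).1
    have : IsLocalRing (R ⧸ p ^ n) := Ideal.Quotient.isLocalRing_of_isMaximal_radical <| by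
      rw [Ideal.radical_pow _ hn, hp'.radical]
      exact hp'.isMaximal_of_ne_bot hp
    exact Ideal.le_total_of_ringEquiv_pi e fun i => (hRs i).2
  have : IsIntegrallyClosed R := .of_localization_maximal fun p hp _ =>
    have : IsDomain (Localization.AtPrime p) :=
      IsLocalization.isDomain_localization p.primeCompl_le_nonZeroDivisors
    have : ValuationRing (Localization.AtPrime p) :=
      ValuationRing.iff_ideal_total.mpr ⟨hchain p hp⟩
    inferInstance
  exact ⟨hchain, this, {}⟩
end

section
/- Let R be a one-dimensional Noetherian domain. Then R is a Dedekind domain if and only if for every nonzero ideal I, the ring R/I is a finite direct product of local rings whose ideals are linearly ordered by inclusion. -/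
/-!
For a Dedekind domain, the Chinese remainder theorem splits `R ⧸ I` into the factors `R ⧸ p ^ e`
over the prime factorization of `I`, and the ideals of `R ⧸ p ^ e` are the images of the `p ^ i`.

Conversely, take `x, y` and a maximal ideal `p ∋ x * y`. Under `R ⧸ (x * y) ≃ ∏ Rᵢ`, the
prime `p` comes from a single factor `Rᵢ`, where divisibility is total; lifting back gives
`x ∣ y * w` or `y ∣ x * w` with `w ∉ p` the idempotent of that factor. So every `R_p` is a
valuation ring, hence integrally closed, and integral closedness is a local property.
-/

open Ideal UniqueFactorizationMonoid

def IsFinitePiOfChainLocal (S : Type u) [CommRing S] : Prop :=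
  ∃ (k : ℕ) (Rs : Fin k → Type u) (_ : ∀ i, CommRing (Rs i)),
    Nonempty (S ≃+* ∀ i, Rs i) ∧
      ∀ i, IsLocalRing (Rs i) ∧ ∀ A B : Ideal (Rs i), A ≤ B ∨ B ≤ A

section

variable {R : Type*} [CommRing R]

theorem Ideal.Quotient.preValuationRing_of_le_total {I : Ideal R}
    (h : ∀ J K : Ideal R, I ≤ J → I ≤ K → J ≤ K ∨ K ≤ J) :
    PreValuationRing (R ⧸ I) := by
  refine PreValuationRing.iff_ideal_total.mpr ⟨fun A B => ?_⟩
  have hle (A : Ideal (R ⧸ I)) : I ≤ A.comap (Quotient.mk I) :=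
    mk_ker.symm.trans_le (ker_le_comap _)
  simpa only [comap_le_comap_iff_of_surjective _ Quotient.mk_surjective] using
    h _ _ (hle A) (hle B)

theorem Ideal.le_total_of_prime_pow_le [IsDedekindDomain R] {p I J : Ideal R} (hp : Prime p)
    {n : ℕ} (hI : p ^ n ≤ I) (hJ : p ^ n ≤ J) : I ≤ J ∨ J ≤ I := by
  obtain ⟨i, -, hi⟩ := (dvd_prime_pow hp n).mp (dvd_iff_le.mpr hI)
  obtain ⟨j, -, hj⟩ := (dvd_prime_pow hp n).mp (dvd_iff_le.mpr hJ)
  rw [associated_iff_eq.mp hi, associated_iff_eq.mp hj]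
  exact (le_total j i).imp (pow_le_pow_right ·) (pow_le_pow_right ·)

theorem Pi.dvd_mul_single_of_dvd {ι : Type*} [DecidableEq ι] {Rs : ι → Type*}
    [∀ i, CommRing (Rs i)] {a b : ∀ i, Rs i} {i : ι} (h : a i ∣ b i) :
    a ∣ b * Pi.single i 1 := by
  obtain ⟨c, hc⟩ := h
  refine ⟨Pi.single i c, funext fun j => ?_⟩
  rcases eq_or_ne j i with rfl | hji
  · simp [hc]
  · simp [hji]

theorem Pi.exists_notMem_dvd_mul_or_dvd_mul {ι : Type*} [Finite ι] {Rs : ι → Type*}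
    [∀ i, CommRing (Rs i)] [∀ i, PreValuationRing (Rs i)] (P : Ideal (∀ i, Rs i)) [P.IsPrime]
    (a b : ∀ i, Rs i) : ∃ w ∉ P, a ∣ b * w ∨ b ∣ a * w := by
  classical
  obtain ⟨i, q, hq⟩ := PrimeSpectrum.exists_comap_evalRingHom_eq ⟨P, ‹_›⟩
  have hw : Pi.single i 1 ∉ P := by
    have h1 : (1 : Rs i) ∉ q.asIdeal := q.asIdeal.ne_top_iff_one.mp q.2.ne_top
    have hP : P = q.asIdeal.comap (Pi.evalRingHom Rs i) := congrArg PrimeSpectrum.asIdeal hq.symm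
    simpa [hP] using h1
  exact ⟨Pi.single i 1, hw, (ValuationRing.dvd_total (a i) (b i)).imp
    Pi.dvd_mul_single_of_dvd Pi.dvd_mul_single_of_dvd⟩

theorem dvd_of_map_dvd_of_ker_le_span {S : Type*} [CommRing S] {f : R →+* S}
    (hf : Function.Surjective f) {a b : R} (hker : RingHom.ker f ≤ span {b}) (h : f b ∣ f a) :
    b ∣ a := by
  obtain ⟨c, hc⟩ := h
  obtain ⟨t, rfl⟩ := hf c
  have hsub : b ∣ a - b * t :=
    mem_span_singleton.mp (hker (by simp [RingHom.mem_ker, hc]))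
  simpa using hsub.add (dvd_mul_right b t)

end

theorem IsDedekindDomain.isFinitePiOfChainLocal_quotient {R : Type u} [CommRing R]
    [IsDedekindDomain R] {I : Ideal R} (hI : I ≠ ⊥) : IsFinitePiOfChainLocal (R ⧸ I) := by
  classical
  let e := (factors I).toFinset.equivFin
  refine ⟨_, fun i => R ⧸ (e.symm i : Ideal R) ^ (factors I).count (e.symm i : Ideal R),
    fun _ => inferInstance,
    ⟨(quotientEquivPiFactors hI).trans (RingEquiv.piCongrLeft' _ e)⟩, fun i => ?_⟩
  set P : Ideal R := (e.symm i : Ideal R)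
  have hPI : P ∈ factors I := Multiset.mem_toFinset.mp (e.symm i).2
  have hP : Prime P := prime_of_factor P hPI
  have : PreValuationRing (R ⧸ P ^ (factors I).count P) :=
    Quotient.preValuationRing_of_le_total fun _ _ => le_total_of_prime_pow_le hP
  have : Nontrivial (R ⧸ P ^ (factors I).count P) :=
    Quotient.nontrivial_iff.mpr fun h => (isPrime_of_prime hP).ne_top
      (top_le_iff.mp (h ▸ pow_le_self (Multiset.count_pos.mpr hPI).ne'))
  exact ⟨inferInstance, (PreValuationRing.iff_ideal_total.mp ‹_›).total⟩

theorem IsFinitePiOfChainLocal.exists_notMem_dvd_mul_or_dvd_mul {R : Type u} [CommRing R]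
    {p : Ideal R} [p.IsPrime] {x y : R} (hxy : x * y ∈ p)
    (h : IsFinitePiOfChainLocal (R ⧸ span {x * y})) :
    ∃ w ∉ p, x ∣ y * w ∨ y ∣ x * w := by
  obtain ⟨k, Rs, _, ⟨e⟩, hRs⟩ := h
  have (i : Fin k) : PreValuationRing (Rs i) := PreValuationRing.iff_ideal_total.mpr ⟨(hRs i).2⟩
  let f := e.toRingHom.comp (Ideal.Quotient.mk (span {x * y}))
  have hf : Function.Surjective f := e.surjective.comp Quotient.mk_surjective
  have hker : RingHom.ker f = span {x * y} :=
    (RingHom.ker_comp_of_injective _ e.injective).trans mk_ker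
  have : (p.map f).IsPrime :=
    map_isPrime_of_surjective hf (hker ▸ (span_singleton_le_iff_mem p).mpr hxy)
  obtain ⟨_, hw, hdvd⟩ := Pi.exists_notMem_dvd_mul_or_dvd_mul (p.map f) (f x) (f y)
  obtain ⟨w, rfl⟩ := hf ‹_›
  refine ⟨w, fun hwp => hw (mem_map_of_mem f hwp), ?_⟩
  have hker_x : RingHom.ker f ≤ span {x} :=
    hker ▸ span_singleton_le_span_singleton.mpr (dvd_mul_right x y)
  have hker_y : RingHom.ker f ≤ span {y} :=
    hker ▸ span_singleton_le_span_singleton.mpr (dvd_mul_left y x)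
  simp only [← map_mul] at hdvd
  exact hdvd.imp (dvd_of_map_dvd_of_ker_le_span hf hker_x) (dvd_of_map_dvd_of_ker_le_span hf hker_y)

theorem exists_notMem_dvd_mul_or_dvd_mul_of_isFinitePiOfChainLocal {R : Type u} [CommRing R]
    [IsDomain R] (H : ∀ I : Ideal R, I ≠ ⊥ → IsFinitePiOfChainLocal (R ⧸ I))
    (p : Ideal R) [p.IsPrime] (x y : R) : ∃ w ∉ p, x ∣ y * w ∨ y ∣ x * w := by
  by_cases hxy : x * y ∈ p
  · rcases eq_or_ne (x * y) 0 with h0 | h0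
    · refine ⟨1, p.ne_top_iff_one.mp ‹p.IsPrime›.ne_top, ?_⟩
      rcases mul_eq_zero.mp h0 with rfl | rfl <;> simp
    · exact (H _ (span_singleton_eq_bot.not.mpr h0)).exists_notMem_dvd_mul_or_dvd_mul hxy
  · exact ⟨x, fun hx => hxy (p.mul_mem_right y hx), .inl (dvd_mul_left x y)⟩

theorem IsLocalization.AtPrime.preValuationRing {R : Type*} [CommRing R] (S : Type*)
    [CommRing S] [Algebra R S] (p : Ideal R) [p.IsPrime] [IsLocalization.AtPrime S p]
    (h : ∀ x y : R, ∃ w ∉ p, x ∣ y * w ∨ y ∣ x * w) : PreValuationRing S := by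
  have dvd_total_algebraMap (x y : R) :
      algebraMap R S x ∣ algebraMap R S y ∨ algebraMap R S y ∣ algebraMap R S x := by
    obtain ⟨w, hw, hdvd⟩ := h x y
    have hunit : IsUnit (algebraMap R S w) := map_units S (⟨w, hw⟩ : p.primeCompl)
    refine hdvd.imp (fun hd => ?_) (fun hd => ?_) <;>
      simpa [hunit.dvd_mul_right] using map_dvd (algebraMap R S) hd
  have associated_algebraMap (a : S) : ∃ x : R, Associated a (algebraMap R S x) := by
    obtain ⟨⟨x, s⟩, hx⟩ := surj p.primeCompl a
    exact ⟨x, hx ▸ associated_mul_unit_right a _ (map_units S s)⟩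
  refine PreValuationRing.iff_dvd_total.mpr ⟨fun a b => ?_⟩
  obtain ⟨x, hx⟩ := associated_algebraMap a
  obtain ⟨y, hy⟩ := associated_algebraMap b
  rw [hx.dvd_iff_dvd_left, hx.dvd_iff_dvd_right, hy.dvd_iff_dvd_left, hy.dvd_iff_dvd_right]
  exact dvd_total_algebraMap x y

theorem IsDedekindDomain.of_preValuationRing_localization {R : Type*} [CommRing R] [IsDomain R]
    [IsNoetherianRing R] [Ring.KrullDimLE 1 R]
    (h : ∀ (p : Ideal R) [p.IsMaximal], PreValuationRing (Localization.AtPrime p)) :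
    IsDedekindDomain R := by
  have : IsIntegrallyClosed R := .of_localization_maximal fun p _ _ =>
    have : ValuationRing (Localization.AtPrime p) := { h p with }
    inferInstance
  have : Ring.DimensionLEOne R := ⟨fun hne hp => hp.isMaximal_of_ne_bot hne⟩
  exact { }

/-- **Lemma 3 of the paper.** A one-dimensional Noetherian domain `R` is
a Dedekind domain iff for every nonzero ideal `I`, the ring `R ⧸ I` is a finite direct
product of local rings whose ideals are linearly ordered by inclusion. -/
theorem dedekind_iff_quotients_products_of_chain_local (R : Type u) [CommRing R]
    [IsDomain R] [IsNoetherianRing R] (hdim : ringKrullDim R = 1) :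
    IsDedekindDomain R ↔
      ∀ I : Ideal R, I ≠ ⊥ →
        ∃ (k : ℕ) (Rs : Fin k → Type u) (_ : ∀ i, CommRing (Rs i)),
          Nonempty ((R ⧸ I) ≃+* ∀ i, Rs i) ∧
            ∀ i, IsLocalRing (Rs i) ∧ ∀ A B : Ideal (Rs i), A ≤ B ∨ B ≤ A := by
  refine ⟨fun _ _ => IsDedekindDomain.isFinitePiOfChainLocal_quotient, fun H => ?_⟩
  have : Ring.KrullDimLE 1 R := Ring.krullDimLE_iff.mpr hdim.le
  exact .of_preValuationRing_localization fun p _ => IsLocalization.AtPrime.preValuationRing _ p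
    (exists_notMem_dvd_mul_or_dvd_mul_of_isFinitePiOfChainLocal H p)
end
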